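/- Let c : ℤ×ℤ → ℝ be finitely supported with c(k,l) = c(l,k), and define μ̂(k₁,k₂) := Σ_{y₁,y₂} c(y₁,y₂) e^{−2πi(k₁y₁ + k₂y₂)} and B_ε(f,g)(x) := Σ_{k,l} c(k,l) f(x+εk) g(x+εl). Let ε = 2^{−N} and let f, g : εℤ → ℝ satisfy ε Σ_{x∈εℤ} |f(x)| < ∞ and ε Σ_{x∈εℤ} |g(x)| < ∞, with discrete Fourier transforms 𝓕^ε f(k) := ε Σ_{x∈εℤ} f(x) e^{−2πikx}. Then ε Σ_{x∈εℤ} B_ε(f,g)(x) = ∫_{−1/(2ε)}^{1/(2ε)} 𝓕^ε f(k) · 𝓕^ε g(−k) · μ̂(−εk, εk) dk. -/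

import Mathlib

open Real

noncomputable section

/-- The discrete Fourier transform `𝓕^ε f(k) = ε Σ_{x∈εℤ} f(x) e^{-2πikx}`,
for a grid function given by its values `f j` at the points `ε j`. -/
def dFT (ε : ℝ) (f : ℤ → ℝ) (k : ℝ) : ℂ :=
  ε * ∑' j : ℤ, (f j : ℂ) * Complex.exp (-(2 * Real.pi * k * (ε * j)) * Complex.I)

/-- The Fourier transform `μ̂(k₁,k₂) = Σ_{y₁,y₂} c(y₁,y₂) e^{-2πi(k₁y₁+k₂y₂)}`
of the finitely supported measure with weights `c`. -/
def muHat (c : (ℤ × ℤ) →₀ ℝ) (k₁ k₂ : ℝ) : ℂ :=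
  ∑ p ∈ c.support,
    (c p : ℂ) * Complex.exp (-(2 * Real.pi * (k₁ * p.1 + k₂ * p.2)) * Complex.I)

/-- The twisted discrete product `B_ε(f,g)(x) = Σ_{k,l} c(k,l) f(x+εk) g(x+εl)`
on grid indices. -/
def BprodFn (c : (ℤ × ℤ) →₀ ℝ) (f g : ℤ → ℝ) : ℤ → ℝ :=
  fun j => ∑ p ∈ c.support, c p * f (j + p.1) * g (j + p.2)

/-! Writing `μ̂(-εk, εk) = Σ_p c(p) e^{2πiεk(p₁-p₂)}` and absorbing the two phases into shifts of
`f` and `g`, the integrand becomes `Σ_p c(p) 𝓕^ε f(· + p₁)(k) 𝓕^ε g(· + p₂)(-k)`, and the claim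
reduces, for each `p`, to the discrete Parseval identity
`∫_{-1/(2ε)}^{1/(2ε)} 𝓕^ε u(k) 𝓕^ε v(-k) dk = ε Σ_j u(j) v(j)`. That identity follows by expanding
the product into an absolutely convergent double series over `(j, m)`, integrating term by term
(dominated convergence), and using that `k ↦ e^{2πiεnk}` integrates to `δ_{n,0}/ε` over an
interval of length `1/ε`. -/

open scoped FourierTransform

section
variable {ε : ℝ}

lemma dFT_eq_tsum_fourierChar (u : ℤ → ℝ) (k : ℝ) :
    dFT ε u k = ε * ∑' j : ℤ, (u j : ℂ) * 𝐞 (-(ε * j * k)) := by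
  unfold dFT
  congr 1
  refine tsum_congr fun j => ?_
  rw [Real.fourierChar_apply]
  push_cast
  ring_nf

lemma muHat_neg_self (c : (ℤ × ℤ) →₀ ℝ) (t : ℝ) :
    muHat c (-t) t = ∑ p ∈ c.support, (c p : ℂ) * 𝐞 (t * (p.1 - p.2)) := by
  unfold muHat
  refine Finset.sum_congr rfl fun p _ => ?_
  rw [Real.fourierChar_apply]
  push_cast
  ring_nf

lemma dFT_comp_add_right (u : ℤ → ℝ) (a : ℤ) (k : ℝ) :
    dFT ε (fun j => u (j + a)) k = 𝐞 (ε * a * k) * dFT ε u k := by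
  simp only [dFT_eq_tsum_fourierChar]
  rw [mul_left_comm, ← tsum_mul_left (a := (𝐞 (ε * a * k) : ℂ)),
    ← (Equiv.addRight a).tsum_eq (fun j => 𝐞 (ε * a * k) * ((u j : ℂ) * 𝐞 (-(ε * j * k))))]
  congr 1
  refine tsum_congr fun j => ?_
  simp only [Equiv.coe_addRight, Int.cast_add]
  rw [mul_left_comm, ← Circle.coe_mul, ← AddChar.map_add_eq_mul]
  ring_nf

lemma continuous_dFT {u : ℤ → ℝ} (hu : Summable fun j => |u j|) : Continuous (dFT ε u) := by
  simp only [funext (dFT_eq_tsum_fourierChar (ε := ε) u)]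
  refine continuous_const.mul (continuous_tsum (fun j => ?_) hu fun j k => ?_)
  · fun_prop
  · simp [Circle.norm_coe]

lemma integral_fourierChar_mul_int (hε : 0 < ε) (n : ℤ) :
    ∫ k in (-(1 / (2 * ε)))..(1 / (2 * ε)), (𝐞 (ε * n * k) : ℂ) =
      if n = 0 then (ε : ℂ)⁻¹ else 0 := by
  split_ifs with hn
  · simp only [hn, Int.cast_zero, mul_zero, zero_mul, AddChar.map_zero_eq_one, Circle.coe_one,
      intervalIntegral.integral_const, Complex.real_smul, mul_one]
    push_cast
    field_simp
    ring
  set c : ℂ := 2 * π * ε * n * Complex.I with hc_def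
  have hc : c ≠ 0 := by
    have : (ε : ℂ) ≠ 0 := by exact_mod_cast hε.ne'
    simp [c, this, hn, Real.pi_ne_zero, Complex.I_ne_zero]
  have hexp : ∀ k : ℝ, (𝐞 (ε * n * k) : ℂ) = Complex.exp (c * k) := fun k => by
    rw [Real.fourierChar_apply, hc_def]; push_cast; ring_nf
  have hperiod : c * ((1 / (2 * ε) : ℝ) : ℂ) =
      c * ((-(1 / (2 * ε)) : ℝ) : ℂ) + n * (2 * π * Complex.I) := by
    have : (ε : ℂ) ≠ 0 := by exact_mod_cast hε.ne'
    push_cast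
    field_simp
    ring
  simp only [hexp]
  rw [integral_exp_mul_complex hc, hperiod, Complex.exp_add, Complex.exp_int_mul_two_pi_mul_I,
    mul_one, sub_self, zero_div]

lemma hasSum_dFT_mul_dFT_neg {u v : ℤ → ℝ} (hu : Summable fun j => |u j|)
    (hv : Summable fun j => |v j|) (k : ℝ) :
    HasSum (fun q : ℤ × ℤ => ((ε ^ 2 * u q.1 * v q.2 : ℝ) : ℂ) * 𝐞 (ε * (q.2 - q.1 : ℤ) * k))
      (dFT ε u k * dFT ε v (-k)) := by
  have hu' : Summable fun j : ℤ => ‖(u j : ℂ) * 𝐞 (-(ε * j * k))‖ := by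
    simpa [Circle.norm_coe] using hu
  have hv' : Summable fun m : ℤ => ‖(v m : ℂ) * 𝐞 (-(ε * m * -k))‖ := by
    simpa [Circle.norm_coe] using hv
  rw [dFT_eq_tsum_fourierChar, dFT_eq_tsum_fourierChar, mul_mul_mul_comm,
    tsum_mul_tsum_of_summable_norm hu' hv']
  refine ((summable_mul_of_summable_norm hu' hv').hasSum.mul_left ((ε : ℂ) * ε)).congr_fun
    fun q => ?_
  have he : (𝐞 (-(ε * q.1 * k)) : ℂ) * 𝐞 (-(ε * q.2 * -k)) = 𝐞 (ε * (q.2 - q.1 : ℤ) * k) := by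
    rw [← Circle.coe_mul, ← AddChar.map_add_eq_mul]
    push_cast
    ring_nf
  rw [← he]
  push_cast
  ring

theorem hasSum_integral_dFT_mul_dFT_neg (hε : 0 < ε) {u v : ℤ → ℝ}
    (hu : Summable fun j => |u j|) (hv : Summable fun j => |v j|) :
    HasSum (fun j : ℤ => ((ε * u j * v j : ℝ) : ℂ))
      (∫ k in (-(1 / (2 * ε)))..(1 / (2 * ε)), dFT ε u k * dFT ε v (-k)) := by
  set F : ℤ × ℤ → ℝ → ℂ := fun q k =>
    ((ε ^ 2 * u q.1 * v q.2 : ℝ) : ℂ) * 𝐞 (ε * (q.2 - q.1 : ℤ) * k) with hF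
  have hF_norm : ∀ q k, ‖F q k‖ = ε ^ 2 * |u q.1| * |v q.2| := fun q k => by
    simp [hF, Circle.norm_coe]
  have hF_integral : ∀ q, ∫ k in (-(1 / (2 * ε)))..(1 / (2 * ε)), F q k =
      if q.1 = q.2 then ((ε * u q.1 * v q.2 : ℝ) : ℂ) else 0 := fun q => by
    have hε' : (ε : ℂ) ≠ 0 := by exact_mod_cast hε.ne'
    rw [intervalIntegral.integral_const_mul, integral_fourierChar_mul_int hε]
    by_cases hq : q.1 = q.2
    · simp only [hq, sub_self, if_true]
      push_cast
      field_simp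
    · rw [if_neg (sub_ne_zero.mpr (Ne.symm hq)), if_neg hq, mul_zero]
  have h : HasSum (fun q => ∫ k in (-(1 / (2 * ε)))..(1 / (2 * ε)), F q k)
      (∫ k in (-(1 / (2 * ε)))..(1 / (2 * ε)), dFT ε u k * dFT ε v (-k)) :=
    intervalIntegral.hasSum_integral_of_dominated_convergence
      (fun q _ => ε ^ 2 * |u q.1| * |v q.2|)
      (fun q => (by fun_prop : Continuous (F q)).aestronglyMeasurable)
      (fun q => .of_forall fun k _ => (hF_norm q k).le)
      (.of_forall fun _ _ =>
        ((hu.mul_of_nonneg hv (fun _ => abs_nonneg _) fun _ => abs_nonneg _).mul_left (ε ^ 2)).congr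
          fun q => by ring)
      intervalIntegrable_const (.of_forall fun k _ => hasSum_dFT_mul_dFT_neg hu hv k)
  simp only [hF_integral] at h
  refine ((Function.Injective.hasSum_iff (g := fun j : ℤ => (j, j)) ?_ ?_).mpr h).congr_fun
    fun j => by simp
  · exact fun i j hij => (Prod.mk.inj hij).1
  · rintro ⟨i, j⟩ hij
    rw [if_neg]
    rintro (rfl : i = j)
    exact hij ⟨i, rfl⟩

lemma dFT_mul_dFT_neg_mul_muHat (c : (ℤ × ℤ) →₀ ℝ) (f g : ℤ → ℝ) (k : ℝ) :
    dFT ε f k * dFT ε g (-k) * muHat c (-(ε * k)) (ε * k) = ∑ p ∈ c.support,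
      (c p : ℂ) * (dFT ε (fun j => f (j + p.1)) k * dFT ε (fun j => g (j + p.2)) (-k)) := by
  rw [muHat_neg_self, Finset.mul_sum]
  refine Finset.sum_congr rfl fun p _ => ?_
  have he : (𝐞 (ε * p.1 * k) : ℂ) * 𝐞 (ε * p.2 * -k) = 𝐞 (ε * k * (p.1 - p.2)) := by
    rw [← Circle.coe_mul, ← AddChar.map_add_eq_mul]
    ring_nf
  rw [dFT_comp_add_right, dFT_comp_add_right, ← he]
  ring

end

theorem statement17_general (c : (ℤ × ℤ) →₀ ℝ)
    (N : ℕ) (ε : ℝ) (hε : ε = ((2 : ℝ) ^ N)⁻¹)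
    (f g : ℤ → ℝ) (hf : Summable fun j : ℤ => |f j|)
    (hg : Summable fun j : ℤ => |g j|) :
    ((ε * ∑' j : ℤ, BprodFn c f g j : ℝ) : ℂ) =
      ∫ k in (-(1 / (2 * ε)))..(1 / (2 * ε)),
        dFT ε f k * dFT ε g (-k) * muHat c (-(ε * k)) (ε * k) := by
  have hε0 : 0 < ε := hε ▸ by positivity
  have hf_shift (a : ℤ) : Summable fun j => |f (j + a)| := (Equiv.addRight a).summable_iff.mpr hf
  have hg_shift (a : ℤ) : Summable fun j => |g (j + a)| := (Equiv.addRight a).summable_iff.mpr hg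
  have hterm (p : ℤ × ℤ) : HasSum (fun j => ((c p * (ε * f (j + p.1) * g (j + p.2)) : ℝ) : ℂ))
      ((c p : ℂ) * ∫ k in (-(1 / (2 * ε)))..(1 / (2 * ε)),
        dFT ε (fun j => f (j + p.1)) k * dFT ε (fun j => g (j + p.2)) (-k)) := by
    simpa using
      (hasSum_integral_dFT_mul_dFT_neg hε0 (hf_shift p.1) (hg_shift p.2)).mul_left (c p : ℂ)
  calc ((ε * ∑' j : ℤ, BprodFn c f g j : ℝ) : ℂ)
      = ∑' j, ∑ p ∈ c.support, ((c p * (ε * f (j + p.1) * g (j + p.2)) : ℝ) : ℂ) := by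
        rw [← tsum_mul_left, Complex.ofReal_tsum]
        refine tsum_congr fun j => ?_
        simp only [BprodFn, Finset.mul_sum]
        push_cast
        exact Finset.sum_congr rfl fun p _ => by ring
    _ = ∑ p ∈ c.support, (c p : ℂ) * ∫ k in (-(1 / (2 * ε)))..(1 / (2 * ε)),
          dFT ε (fun j => f (j + p.1)) k * dFT ε (fun j => g (j + p.2)) (-k) :=
        (hasSum_sum fun p _ => hterm p).tsum_eq
    _ = _ := by
        simp_rw [dFT_mul_dFT_neg_mul_muHat, ← intervalIntegral.integral_const_mul]
        have hcont (p : ℤ × ℤ) : Continuous fun k =>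
            (c p : ℂ) * (dFT ε (fun j => f (j + p.1)) k * dFT ε (fun j => g (j + p.2)) (-k)) :=
          continuous_const.mul ((continuous_dFT (hf_shift p.1)).mul
            ((continuous_dFT (hg_shift p.2)).comp continuous_neg))
        rw [intervalIntegral.integral_finsetSum fun p _ => (hcont p).intervalIntegrable _ _]

/-- Parseval-type identity for the twisted discrete product. -/
theorem statement17 (c : (ℤ × ℤ) →₀ ℝ) (hc : ∀ k l : ℤ, c (k, l) = c (l, k))
    (N : ℕ) (ε : ℝ) (hε : ε = ((2 : ℝ) ^ N)⁻¹)
    (f g : ℤ → ℝ) (hf : Summable fun j : ℤ => |f j|)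
    (hg : Summable fun j : ℤ => |g j|) :
    ((ε * ∑' j : ℤ, BprodFn c f g j : ℝ) : ℂ) =
      ∫ k in (-(1 / (2 * ε)))..(1 / (2 * ε)),
        dFT ε f k * dFT ε g (-k) * muHat c (-(ε * k)) (ε * k) :=
  statement17_general c N ε hε f g hf hg
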